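/- (Locality lemma) Let 𝒯 be an envy-free allocation, T ∈ 𝒯, and a ∈ T. Then φ(T, x_a) ≤ φ(T', x_a) for every T' ∈ 𝒯. Moreover, if x_a > min_{a'∈T'} x_{a'}, the inequality is strict. -/

import Mathlib

open Finset MeasureTheory ENNReal

/-- Number of agents in coalition `T` whose destination is at least `r`. -/
noncomputable def nT (xd : ℕ → ℝ) (T : Finset ℕ) (r : ℝ) : ℕ := (T.filter fun a => r ≤ xd a).card

/-- Shapley cost share of a passenger dropping at `y` in coalition `T`
(`∞` when `n_T` vanishes on part of `(0,y]`). -/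
noncomputable def phi (xd : ℕ → ℝ) (T : Finset ℕ) (y : ℝ) : ℝ≥0∞ :=
  ∫⁻ r in Set.Ioc (0:ℝ) y, (nT xd T r : ℝ≥0∞)⁻¹

/-- Cost share including the capacity constraint of the taxi. -/
noncomputable def taxiCost (xd : ℕ → ℝ) (q : ℕ) (T : Finset ℕ) (y : ℝ) : ℝ≥0∞ :=
  if T.card ≤ q then phi xd T y else ⊤

/-- Envy-freeness for an allocation (Shapley cost shares `phi`, no capacities). -/
def EnvyFreePhi (xd : ℕ → ℝ) {k : ℕ} (Tl : Fin k → Finset ℕ) : Prop :=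
  ∀ i j, i ≠ j → ∀ a ∈ Tl i, ∀ b ∈ Tl j,
    phi xd (Tl i) (xd a) ≤ phi xd ((Tl j).erase b ∪ {a}) (xd a)

/-! Envy-freeness compares `a`'s coalition with `T' - b + a`. Swapping `b` out for `a` never
lowers `n_{T'}` on `(0, x_a]` and raises it by one on `(x_b, x_a]`, so `φ(T' - b + a, x_a)` is at
most `φ(T', x_a)`, strictly so when `b` is a first drop-off of `T'` before `x_a`. An empty `T'`
costs `∞`. -/

section Swap

variable {xd : ℕ → ℝ} {T : Finset ℕ} {a b : ℕ} {r : ℝ}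

lemma nT_antitone (xd : ℕ → ℝ) (T : Finset ℕ) : Antitone (nT xd T) :=
  fun _ _ hrs => card_le_card <| monotone_filter_right T fun _ _ => hrs.trans

lemma measurable_inv_nT (xd : ℕ → ℝ) (T : Finset ℕ) :
    Measurable fun r => (nT xd T r : ℝ≥0∞)⁻¹ :=
  Monotone.measurable fun _ _ hrs =>
    ENNReal.inv_le_inv.mpr (Nat.cast_le.mpr (nT_antitone xd T hrs))

lemma nT_erase_union_singleton (ha : a ∉ T) (hr : r ≤ xd a) :
    nT xd (T.erase b ∪ {a}) r = #((T.filter fun c => r ≤ xd c).erase b) + 1 := by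
  have hnot : a ∉ (T.filter fun c => r ≤ xd c).erase b := fun h =>
    ha (mem_of_mem_filter a (mem_of_mem_erase h))
  rw [nT, filter_union, filter_singleton, if_pos hr, filter_erase,
    card_union_of_disjoint (disjoint_singleton_right.mpr hnot), card_singleton]

lemma nT_le_nT_erase_union_singleton (ha : a ∉ T) (hr : r ≤ xd a) :
    nT xd T r ≤ nT xd (T.erase b ∪ {a}) r := by
  rw [nT_erase_union_singleton ha hr]
  have := pred_card_le_card_erase (s := T.filter fun c => r ≤ xd c) (a := b)
  unfold nT
  omega

lemma nT_erase_union_singleton_eq_succ (ha : a ∉ T) (hr : r ≤ xd a) (hbr : xd b < r) :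
    nT xd (T.erase b ∪ {a}) r = nT xd T r + 1 := by
  rw [nT_erase_union_singleton ha hr,
    erase_eq_of_notMem fun h => (mem_filter.mp h).2.not_gt hbr, nT]

lemma phi_erase_union_singleton_le (ha : a ∉ T) :
    phi xd (T.erase b ∪ {a}) (xd a) ≤ phi xd T (xd a) :=
  setLIntegral_mono (measurable_inv_nT xd T) fun _ hr =>
    ENNReal.inv_le_inv.mpr (Nat.cast_le.mpr (nT_le_nT_erase_union_singleton ha hr.2))

lemma phi_lt_top_of_mem (ha : a ∈ T) : phi xd T (xd a) < ⊤ := by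
  refine setLIntegral_lt_top_of_le_nnreal (by simp) ⟨1, fun r hr => ?_⟩
  have : 0 < nT xd T r := card_pos.mpr ⟨a, mem_filter.mpr ⟨ha, hr.2⟩⟩
  simpa [ENNReal.inv_le_one, Nat.one_le_iff_ne_zero] using this.ne'

lemma phi_empty {y : ℝ} (hy : 0 < y) : phi xd ∅ y = ⊤ := by
  simp [phi, nT, hy]

lemma phi_erase_union_singleton_lt (ha : a ∉ T) (hba : xd b < xd a) (ha_pos : 0 < xd a) :
    phi xd (T.erase b ∪ {a}) (xd a) < phi xd T (xd a) := by
  set s := Set.Ioc (max 0 (xd b)) (xd a)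
  have hs : s ⊆ Set.Ioc 0 (xd a) := Set.Ioc_subset_Ioc_left (le_max_left _ _)
  have hμs : volume.restrict (Set.Ioc 0 (xd a)) s ≠ 0 := by
    rw [Measure.restrict_apply measurableSet_Ioc, Set.inter_eq_left.mpr hs, Real.volume_Ioc]
    simpa using max_lt ha_pos hba
  refine lintegral_strict_mono_of_ae_le_of_ae_lt_on (measurable_inv_nT xd T).aemeasurable
    (phi_lt_top_of_mem (mem_union_right _ (mem_singleton_self a))).ne
    ((ae_restrict_iff' measurableSet_Ioc).mpr (ae_of_all _ fun r hr =>
      ENNReal.inv_le_inv.mpr (Nat.cast_le.mpr (nT_le_nT_erase_union_singleton ha hr.2))))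
    hμs (ae_of_all _ fun r hr => ?_)
  rw [nT_erase_union_singleton_eq_succ ha hr.2 (max_lt_iff.mp hr.1).2]
  exact ENNReal.inv_lt_inv.mpr (by exact_mod_cast Nat.lt_succ_self _)

end Swap

/-- Locality lemma: in an envy-free allocation every agent rides a
coalition of minimum `phi`-cost for her destination; the inequality against any other
coalition whose first drop-off point is strictly before her destination is strict. -/
theorem stmt6 (A : Finset ℕ) (xd : ℕ → ℝ) (hpos : ∀ a ∈ A, 0 < xd a)
    (k : ℕ) (Tl : Fin k → Finset ℕ)
    (hdisj : ∀ i j, i ≠ j → Disjoint (Tl i) (Tl j))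
    (hcover : Finset.univ.biUnion Tl = A)
    (hef : EnvyFreePhi xd Tl)
    (i : Fin k) (a : ℕ) (ha : a ∈ Tl i) :
    (∀ j, phi xd (Tl i) (xd a) ≤ phi xd (Tl j) (xd a)) ∧
    (∀ j, j ≠ i → ∀ hj : (Tl j).Nonempty,
      (Tl j).inf' hj xd < xd a →
        phi xd (Tl i) (xd a) < phi xd (Tl j) (xd a)) := by
  have hxa : 0 < xd a := hpos a (hcover ▸ mem_biUnion.mpr ⟨i, mem_univ i, ha⟩)
  have ha_notMem : ∀ j, j ≠ i → a ∉ Tl j := fun j hji =>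
    disjoint_left.mp (hdisj i j (Ne.symm hji)) ha
  refine ⟨fun j => ?_, fun j hji hj hmin => ?_⟩
  · rcases eq_or_ne j i with rfl | hji
    · exact le_rfl
    rcases (Tl j).eq_empty_or_nonempty with hempty | ⟨b, hb⟩
    · simp [hempty, phi_empty hxa]
    · exact (hef i j (Ne.symm hji) a ha b hb).trans
        (phi_erase_union_singleton_le (ha_notMem j hji))
  · obtain ⟨b, hb, hmin_eq⟩ := (Tl j).exists_mem_eq_inf' hj xd
    exact (hef i j (Ne.symm hji) a ha b hb).trans_lt
      (phi_erase_union_singleton_lt (ha_notMem j hji) (hmin_eq ▸ hmin) hxa)
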